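/- arXiv:2402.15762 — 2 statements merged into one kernel-verified Lean document; each statement's English description precedes it below -/
import Mathlib

section
/- Let γ ∈ (1,2], let ω, p, q ∈ ℝⁿ, let a, b ∈ ℝ, and let β : ℝ → ℝ satisfy |β(s)| ≤ M for all s and |β(s) − β(r)| ≤ L|s − r| for all s, r. Then |(ω·p + β(a)|p|)₋ − (ω·q + β(b)|q|^{2−γ})₋| ≤ |ω| |p − q| + M · | |p| − |p|^{2−γ} | + M · |p − q|^{2−γ} + √(2 M L) · |a − b|^{1/2} · |q|^{2−γ}, where |·| denotes the Euclidean norm on ℝⁿ (and absolute value on ℝ) and · denotes the Euclidean inner product. -/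
open Real

/-!
Write `x` and `y` for the two quantities whose negative parts are compared. Taking negative
parts is `1`-Lipschitz, so it suffices to bound `|x - y|`, and
`x - y = ω·(p - q) + β(a)(|p| - |p|^α) + β(a)(|p|^α - |q|^α) + (β(a) - β(b))|q|^α`
with `α = 2 - γ ∈ [0, 1)`. The four terms are bounded by Cauchy–Schwarz, by `|β| ≤ M`, by the
`α`-Hölder continuity of `t ↦ t^α` on `[0, ∞)`, and by interpolating the bounds `2M` and
`L|a - b|` on `|β(a) - β(b)|` through their geometric mean.
-/

lemma abs_max_neg_sub_max_neg_le {α : Type*} [AddCommGroup α] [LinearOrder α]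
    [IsOrderedAddMonoid α] (x y : α) : |max (-x) 0 - max (-y) 0| ≤ |x - y| := by
  simpa only [neg_sub_neg, abs_sub_comm y x] using abs_max_sub_max_le_abs (-x) (-y) 0

namespace Real

lemma abs_rpow_sub_rpow_le {x y α : ℝ} (hx : 0 ≤ x) (hy : 0 ≤ y) (hα₀ : 0 ≤ α)
    (hα₁ : α ≤ 1) : |x ^ α - y ^ α| ≤ |x - y| ^ α := by
  have key : ∀ {u v : ℝ}, 0 ≤ u → 0 ≤ v → u ^ α ≤ v ^ α + |u - v| ^ α := fun {u v} hu hv =>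
    calc u ^ α ≤ (v + |u - v|) ^ α := rpow_le_rpow hu (by linarith [le_abs_self (u - v)]) hα₀
      _ ≤ v ^ α + |u - v| ^ α := rpow_add_le_add_rpow hv (abs_nonneg _) hα₀ hα₁
  rw [abs_sub_le_iff]
  constructor
  · linarith [key hx hy]
  · rw [abs_sub_comm]
    linarith [key hy hx]

lemma le_sqrt_mul_of_le_of_le {t A B : ℝ} (ht : 0 ≤ t) (hA : t ≤ A) (hB : t ≤ B) :
    t ≤ √(A * B) :=
  calc t = √(t * t) := (sqrt_mul_self ht).symm
    _ ≤ √(A * B) := sqrt_le_sqrt (mul_le_mul hA hB ht (ht.trans hA))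

end Real

lemma abs_norm_rpow_sub_norm_rpow_le {E : Type*} [SeminormedAddCommGroup E] (p q : E)
    {α : ℝ} (hα₀ : 0 ≤ α) (hα₁ : α ≤ 1) : |‖p‖ ^ α - ‖q‖ ^ α| ≤ ‖p - q‖ ^ α :=
  (Real.abs_rpow_sub_rpow_le (norm_nonneg p) (norm_nonneg q) hα₀ hα₁).trans
    (rpow_le_rpow (abs_nonneg _) (abs_norm_sub_norm_le p q) hα₀)

lemma abs_sub_le_sqrt_mul_rpow_half_of_bounded_of_lipschitz {β : ℝ → ℝ} {M L : ℝ}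
    (hβM : ∀ s, |β s| ≤ M) (hβL : ∀ s r, |β s - β r| ≤ L * |s - r|) (a b : ℝ) :
    |β a - β b| ≤ √(2 * M * L) * |a - b| ^ ((1 : ℝ) / 2) := by
  have hbound : |β a - β b| ≤ 2 * M := by
    linarith [abs_sub (β a) (β b), hβM a, hβM b]
  calc |β a - β b| ≤ √(2 * M * (L * |a - b|)) :=
        le_sqrt_mul_of_le_of_le (abs_nonneg _) hbound (hβL a b)
    _ = √(2 * M * L) * |a - b| ^ ((1 : ℝ) / 2) := by
        rw [← mul_assoc, sqrt_mul' _ (abs_nonneg _), sqrt_eq_rpow |a - b|]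

/-- Pointwise comparison of the convective term with exponent `1` at `(a, p)` to the
convective term with exponent `γ ∈ (1,2]` at `(b, q)`, for `β` bounded by `M` and
`L`-Lipschitz:
`|(ω·p + β(a)|p|)₋ − (ω·q + β(b)|q|^(2−γ))₋|
  ≤ |ω||p−q| + M | |p| − |p|^(2−γ) | + M |p−q|^(2−γ) + √(2ML) |a−b|^(1/2) |q|^(2−γ)`. -/
theorem convective_exponent_comparison (n : ℕ) (γ : ℝ) (hγ₁ : 1 < γ) (hγ₂ : γ ≤ 2)
    (ω p q : EuclideanSpace ℝ (Fin n)) (a b : ℝ) (M L : ℝ)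
    (β : ℝ → ℝ) (hβM : ∀ s, |β s| ≤ M) (hβL : ∀ s r, |β s - β r| ≤ L * |s - r|) :
    |max (-((inner ℝ ω p : ℝ) + β a * ‖p‖)) 0 -
        max (-((inner ℝ ω q : ℝ) + β b * ‖q‖ ^ (2 - γ))) 0| ≤
      ‖ω‖ * ‖p - q‖ + M * |‖p‖ - ‖p‖ ^ (2 - γ)| + M * ‖p - q‖ ^ (2 - γ) +
        Real.sqrt (2 * M * L) * |a - b| ^ ((1 : ℝ) / 2) * ‖q‖ ^ (2 - γ) := by
  have hα₀ : 0 ≤ 2 - γ := by linarith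
  have hα₁ : 2 - γ ≤ 1 := by linarith
  have hM : 0 ≤ M := (abs_nonneg _).trans (hβM 0)
  have hsplit : (inner ℝ ω p + β a * ‖p‖) - (inner ℝ ω q + β b * ‖q‖ ^ (2 - γ)) =
      inner ℝ ω (p - q) + β a * (‖p‖ - ‖p‖ ^ (2 - γ)) +
        β a * (‖p‖ ^ (2 - γ) - ‖q‖ ^ (2 - γ)) + (β a - β b) * ‖q‖ ^ (2 - γ) := by
    rw [inner_sub_right]
    ring
  refine (abs_max_neg_sub_max_neg_le _ _).trans ?_
  rw [hsplit]
  refine (abs_add_le _ _).trans (add_le_add ((abs_add_le _ _).trans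
    (add_le_add ((abs_add_le _ _).trans (add_le_add ?_ ?_)) ?_)) ?_)
  · exact abs_real_inner_le_norm ω (p - q)
  · rw [abs_mul]
    exact mul_le_mul_of_nonneg_right (hβM a) (abs_nonneg _)
  · rw [abs_mul]
    exact mul_le_mul (hβM a) (abs_norm_rpow_sub_norm_rpow_le p q hα₀ hα₁) (abs_nonneg _) hM
  · have hq : 0 ≤ ‖q‖ ^ (2 - γ) := rpow_nonneg (norm_nonneg q) _
    rw [abs_mul, abs_of_nonneg hq]
    exact mul_le_mul_of_nonneg_right
      (abs_sub_le_sqrt_mul_rpow_half_of_bounded_of_lipschitz hβM hβL a b) hq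
end

section
/- Let Ω ⊆ ℝⁿ be a measurable set of finite Lebesgue measure |Ω|, let γ ∈ (1,2], let K ∈ L²(Ω × Ω), let Θ : Ω → ℝ be measurable with Θ₋(y) ≤ S a.e. (S ≥ 0), let ω : Ω → ℝⁿ be measurable with |ω(x)| ≤ W a.e., and let β : ℝ → ℝ satisfy |β(s)| ≤ M for all s. For u : ℝⁿ → ℝ differentiable at every point of Ω with ‖u‖_{H¹(Ω)} < ∞, define f[u](x) := ∫_Ω (u(y) − Θ(y))₊ K(x,y) dy + (ω(x)·∇u(x) + β(u(x)) |∇u(x)|^{2−γ})₋. Then there exists C > 0, depending only on |Ω| and S, such that ‖f[u]‖_{L²(Ω)} ≤ C ( ‖K‖_{L²(Ω×Ω)} + W + M ) ( ‖u‖_{H¹(Ω)} + 1 ). -/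
/-!
Write `h = (u - Θ)₊`. Cauchy–Schwarz in `y` gives `|∫ h K(x, ·)| ≤ ‖h‖₂ ‖K(x, ·)‖₂`, whose
`L²`-norm in `x` is `‖h‖₂ ‖K‖₂` by Fubini, and `h ≤ |u| + S` gives `‖h‖₂ ≤ ‖u‖₂ + S |Ω|^{1/2}`.
Since `t ^ (2 - γ) ≤ 1 + t` for `0 ≤ 2 - γ ≤ 1`, the transport term is pointwise at most
`(W + M) |∇u| + M`. Minkowski's inequality for this pointwise majorant yields the bound with
`C = 1 + S |Ω|^{1/2} + |Ω|^{1/2}`.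
-/

open MeasureTheory Real

section L2

variable {α : Type*} [MeasurableSpace α] {μ : Measure α}

lemma MeasureTheory.MemLp.norm_toLp_two_eq_sqrt {f : α → ℝ} (hf : MemLp f 2 μ) :
    ‖hf.toLp f‖ = √(∫ a, f a ^ 2 ∂μ) := by
  rw [Lp.norm_toLp, hf.eLpNorm_eq_integral_rpow_norm two_ne_zero ENNReal.ofNat_ne_top,
    ENNReal.toReal_ofReal (by positivity), Real.sqrt_eq_rpow]
  norm_num

lemma abs_integral_mul_le_sqrt_mul_sqrt {f g : α → ℝ} (hf : MemLp f 2 μ) (hg : MemLp g 2 μ) :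
    |∫ a, f a * g a ∂μ| ≤ √(∫ a, f a ^ 2 ∂μ) * √(∫ a, g a ^ 2 ∂μ) := by
  have hfg : ∫ a, f a * g a ∂μ = inner ℝ (hf.toLp f) (hg.toLp g) := by
    rw [L2.inner_def]
    refine integral_congr_ae ?_
    filter_upwards [hf.coeFn_toLp, hg.coeFn_toLp] with a hfa hga
    simp [hfa, hga, mul_comm]
  rw [hfg, ← hf.norm_toLp_two_eq_sqrt, ← hg.norm_toLp_two_eq_sqrt]
  exact abs_real_inner_le_norm _ _

lemma sqrt_integral_sq_add_le {f g : α → ℝ} (hf : MemLp f 2 μ) (hg : MemLp g 2 μ) :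
    √(∫ a, (f a + g a) ^ 2 ∂μ) ≤ √(∫ a, f a ^ 2 ∂μ) + √(∫ a, g a ^ 2 ∂μ) := by
  have h := norm_add_le (hf.toLp f) (hg.toLp g)
  rwa [← MemLp.toLp_add, (hf.add hg).norm_toLp_two_eq_sqrt, hf.norm_toLp_two_eq_sqrt,
    hg.norm_toLp_two_eq_sqrt] at h

lemma sqrt_integral_sq_le_of_sq_le {f F : α → ℝ} (hF : Integrable F μ)
    (hfF : ∀ᵐ a ∂μ, f a ^ 2 ≤ F a) : √(∫ a, f a ^ 2 ∂μ) ≤ √(∫ a, F a ∂μ) :=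
  Real.sqrt_le_sqrt (integral_mono_of_nonneg (.of_forall fun _ => sq_nonneg _) hF hfF)

lemma sqrt_integral_sq_le_add_of_abs_le_add {F f g : α → ℝ} (hf : MemLp f 2 μ)
    (hg : MemLp g 2 μ) (hF : ∀ᵐ a ∂μ, |F a| ≤ f a + g a) :
    √(∫ a, F a ^ 2 ∂μ) ≤ √(∫ a, f a ^ 2 ∂μ) + √(∫ a, g a ^ 2 ∂μ) := by
  refine (sqrt_integral_sq_le_of_sq_le (hf.add hg).integrable_sq ?_).trans
    (sqrt_integral_sq_add_le hf hg)
  filter_upwards [hF] with a ha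
  simpa only [Pi.add_apply, sq_abs] using pow_le_pow_left₀ (abs_nonneg _) ha 2

lemma sqrt_integral_const_mul_sq (c : ℝ) (f : α → ℝ) :
    √(∫ a, (c * f a) ^ 2 ∂μ) = |c| * √(∫ a, f a ^ 2 ∂μ) := by
  simp_rw [mul_pow, integral_const_mul, Real.sqrt_mul (sq_nonneg c), Real.sqrt_sq_eq_abs]

lemma sqrt_integral_const_sq (c : ℝ) : √(∫ _ : α, c ^ 2 ∂μ) = |c| * √(μ.real Set.univ) := by
  rw [integral_const, smul_eq_mul, mul_comm, Real.sqrt_mul (sq_nonneg c), Real.sqrt_sq_eq_abs]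

lemma memLp_two_of_sq_le {f F : α → ℝ} (hf : AEStronglyMeasurable f μ) (hF : Integrable F μ)
    (hfF : ∀ a, f a ^ 2 ≤ F a) : MemLp f 2 μ :=
  (memLp_two_iff_integrable_sq hf).2 <|
    hF.mono' (hf.aemeasurable.pow_const 2).aestronglyMeasurable
      (.of_forall fun a => by simpa only [Real.norm_eq_abs, abs_pow, sq_abs] using hfF a)

variable [IsFiniteMeasure μ]

lemma sqrt_integral_sq_le_of_abs_le_mul_add {F k g : α → ℝ} {c a b : ℝ} (hc : 0 ≤ c)
    (ha : 0 ≤ a) (hb : 0 ≤ b) (hk : MemLp k 2 μ) (hg : MemLp g 2 μ)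
    (hF : ∀ᵐ x ∂μ, |F x| ≤ c * k x + (a * g x + b)) :
    √(∫ x, F x ^ 2 ∂μ) ≤
      c * √(∫ x, k x ^ 2 ∂μ) + (a * √(∫ x, g x ^ 2 ∂μ) + b * √(μ.real Set.univ)) := by
  refine (sqrt_integral_sq_le_add_of_abs_le_add (hk.const_mul c)
    ((hg.const_mul a).add (memLp_const b)) hF).trans ?_
  rw [sqrt_integral_const_mul_sq, abs_of_nonneg hc]
  gcongr
  refine (sqrt_integral_sq_add_le (hg.const_mul a) (memLp_const b)).trans_eq ?_
  rw [sqrt_integral_const_mul_sq, sqrt_integral_const_sq, abs_of_nonneg ha, abs_of_nonneg hb]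

lemma sqrt_integral_sq_max_sub_le {u Θ : α → ℝ} {S : ℝ} (hS : 0 ≤ S) (hu : MemLp u 2 μ)
    (hΘ : AEMeasurable Θ μ) (hΘS : ∀ᵐ a ∂μ, max (-Θ a) 0 ≤ S) :
    MemLp (fun a => max (u a - Θ a) 0) 2 μ ∧
      √(∫ a, max (u a - Θ a) 0 ^ 2 ∂μ) ≤ √(∫ a, u a ^ 2 ∂μ) + S * √(μ.real Set.univ) := by
  have hle : ∀ᵐ a ∂μ, |max (u a - Θ a) 0| ≤ |u a| + S := by
    filter_upwards [hΘS] with a ha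
    rw [abs_of_nonneg (le_max_right _ _)]
    exact max_le (by linarith [le_abs_self (u a), le_max_left (-Θ a) 0]) (by positivity)
  refine ⟨(hu.abs.add (memLp_const S)).mono'
    ((hu.1.aemeasurable.sub hΘ).max aemeasurable_const).aestronglyMeasurable
    (by simpa only [Real.norm_eq_abs, Pi.add_apply, Pi.abs_apply] using hle), ?_⟩
  refine (sqrt_integral_sq_le_add_of_abs_le_add hu.abs (memLp_const S) hle).trans_eq ?_
  simp only [Pi.abs_apply, sq_abs, sqrt_integral_const_sq, abs_of_nonneg hS]

end L2

section Kernel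

variable {α β : Type*} [MeasurableSpace α] [MeasurableSpace β] {μ : Measure α} {ν : Measure β}
  [SFinite ν] {K : α × β → ℝ}

lemma MeasureTheory.MemLp.sqrt_integral_sq_section (hK : MemLp K 2 (μ.prod ν)) :
    MemLp (fun x => √(∫ y, K (x, y) ^ 2 ∂ν)) 2 μ := by
  have hint := hK.integrable_sq.integral_prod_left
  refine (memLp_two_iff_integrable_sq
    (continuous_sqrt.comp_aestronglyMeasurable hint.aestronglyMeasurable)).2 ?_
  exact hint.congr (.of_forall fun x => (Real.sq_sqrt (integral_nonneg fun y => sq_nonneg _)).symm)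

lemma integral_sq_sqrt_integral_sq_section [SFinite μ] (hK : MemLp K 2 (μ.prod ν)) :
    ∫ x, √(∫ y, K (x, y) ^ 2 ∂ν) ^ 2 ∂μ = ∫ p, K p ^ 2 ∂(μ.prod ν) := by
  simp_rw [Real.sq_sqrt (integral_nonneg fun _ => sq_nonneg _)]
  exact integral_integral hK.integrable_sq

lemma ae_abs_integral_mul_section_le [SFinite μ] {h : β → ℝ} (hK : MemLp K 2 (μ.prod ν))
    (hh : MemLp h 2 ν) :
    ∀ᵐ x ∂μ, |∫ y, h y * K (x, y) ∂ν| ≤ √(∫ y, h y ^ 2 ∂ν) * √(∫ y, K (x, y) ^ 2 ∂ν) := by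
  filter_upwards [hK.integrable_sq.prod_right_ae, hK.aestronglyMeasurable.prodMk_left]
    with x hx hxm
  exact abs_integral_mul_le_sqrt_mul_sqrt hh ((memLp_two_iff_integrable_sq hxm).2 hx)

end Kernel

lemma rpow_le_one_add {t p : ℝ} (ht : 0 ≤ t) (hp0 : 0 ≤ p) (hp1 : p ≤ 1) : t ^ p ≤ 1 + t := by
  rcases le_or_gt t 1 with hle | hlt
  · linarith [Real.rpow_le_one ht hle hp0]
  · linarith [Real.rpow_le_self_of_one_le hlt.le hp1]

lemma max_neg_inner_add_mul_rpow_le {E : Type*} [NormedAddCommGroup E]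
    [InnerProductSpace ℝ E] {w g : E} {b p W M : ℝ} (hw : ‖w‖ ≤ W) (hb : |b| ≤ M) (hp0 : 0 ≤ p)
    (hp1 : p ≤ 1) : max (-(inner ℝ w g + b * ‖g‖ ^ p)) 0 ≤ (W + M) * ‖g‖ + M := by
  have hinner : |inner ℝ w g| ≤ W * ‖g‖ :=
    (abs_real_inner_le_norm w g).trans (mul_le_mul_of_nonneg_right hw (norm_nonneg g))
  have hrpow : |b * ‖g‖ ^ p| ≤ M * (1 + ‖g‖) := by
    rw [abs_mul, abs_of_nonneg (rpow_nonneg (norm_nonneg g) p)]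
    exact mul_le_mul hb (rpow_le_one_add (norm_nonneg g) hp0 hp1) (by positivity)
      ((abs_nonneg b).trans hb)
  have habs : |inner ℝ w g + b * ‖g‖ ^ p| ≤ (W + M) * ‖g‖ + M := by
    linarith [abs_add_le (inner ℝ w g) (b * ‖g‖ ^ p)]
  exact max_le ((neg_le_abs _).trans habs) ((abs_nonneg _).trans habs)

lemma measurable_gradient {𝕜 F : Type*} [RCLike 𝕜] [NormedAddCommGroup F]
    [InnerProductSpace 𝕜 F] [CompleteSpace F] [MeasurableSpace F] [BorelSpace F] (f : F → 𝕜) :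
    Measurable (gradient f) :=
  (InnerProductSpace.toDual 𝕜 F).symm.continuous.measurable.comp (measurable_fderiv 𝕜 f)

lemma add_mul_add_le_mul_mul_add_one {N NK S V W M : ℝ} (hN : 0 ≤ N) (hNK : 0 ≤ NK)
    (hS : 0 ≤ S) (hV : 0 ≤ V) (hW : 0 ≤ W) (hM : 0 ≤ M) :
    (N + S * V) * NK + ((W + M) * N + M * V) ≤ (1 + S * V + V) * (NK + W + M) * (N + 1) := by
  have hgap : (1 + S * V + V) * (NK + W + M) * (N + 1)
      - ((N + S * V) * NK + ((W + M) * N + M * V))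
      = (NK + W + M) + S * V * ((NK + W + M) * N + W + M)
        + V * (NK * (N + 1) + W * (N + 1) + M * N) := by ring
  linarith [show 0 ≤ (NK + W + M) + S * V * ((NK + W + M) * N + W + M)
    + V * (NK * (N + 1) + W * (N + 1) + M * N) by positivity]

/-- Bound for the full nonlinearity (time-independent version, used in the proof of
Theorem 1.2): with
`f[u](x) = ∫_Ω (u(y) − Θ(y))₊ K(x,y) dy + (ω(x)·∇u(x) + β(u(x)) |∇u(x)|^(2−γ))₋`,
there is `C > 0`, depending only on `|Ω|` and `S`, such that
`‖f[u]‖_{L²(Ω)} ≤ C (‖K‖_{L²(Ω×Ω)} + W + M)(‖u‖_{H¹(Ω)} + 1)`. -/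
theorem nonlinearity_structural_bound (n : ℕ) (Ω : Set (EuclideanSpace ℝ (Fin n)))
    (hΩ : MeasurableSet Ω) (hΩfin : volume Ω < ⊤) (S : ℝ) (hS : 0 ≤ S) :
    ∃ C > 0, ∀ (γ W M : ℝ)
      (K : EuclideanSpace ℝ (Fin n) × EuclideanSpace ℝ (Fin n) → ℝ)
      (Θ : EuclideanSpace ℝ (Fin n) → ℝ)
      (ω : EuclideanSpace ℝ (Fin n) → EuclideanSpace ℝ (Fin n))
      (β : ℝ → ℝ) (u : EuclideanSpace ℝ (Fin n) → ℝ),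
      1 < γ → γ ≤ 2 → 0 ≤ W →
      MemLp K 2 ((volume.restrict Ω).prod (volume.restrict Ω)) →
      AEMeasurable Θ (volume.restrict Ω) →
      (∀ᵐ y ∂(volume.restrict Ω), max (-(Θ y)) 0 ≤ S) →
      AEMeasurable ω (volume.restrict Ω) →
      (∀ᵐ x ∂(volume.restrict Ω), ‖ω x‖ ≤ W) →
      (∀ s, |β s| ≤ M) →
      (∀ x ∈ Ω, DifferentiableAt ℝ u x) →
      IntegrableOn (fun x => u x ^ 2 + ‖gradient u x‖ ^ 2) Ω →
      (∫ x in Ω,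
          ((∫ y in Ω, max (u y - Θ y) 0 * K (x, y)) +
            max (-((inner ℝ (ω x) (gradient u x) : ℝ) +
              β (u x) * ‖gradient u x‖ ^ (2 - γ))) 0) ^ 2) ^ ((1 : ℝ) / 2) ≤
        C * ((∫ p, K p ^ 2 ∂((volume.restrict Ω).prod (volume.restrict Ω))) ^ ((1 : ℝ) / 2)
              + W + M) *
          ((∫ x in Ω, (u x ^ 2 + ‖gradient u x‖ ^ 2)) ^ ((1 : ℝ) / 2) + 1) := by
  set V := √(volume Ω).toReal
  refine ⟨1 + S * V + V, by positivity, ?_⟩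
  intro γ W M K Θ ω β u hγ1 hγ2 hW hK hΘ hΘS _ hωW hβ hu hH1
  set μ := volume.restrict Ω
  have : IsFiniteMeasure μ := isFiniteMeasure_restrict.2 hΩfin.ne
  have hM : 0 ≤ M := (abs_nonneg _).trans (hβ 0)
  have hV : √(μ.real Set.univ) = V := by rw [measureReal_restrict_apply_univ]; rfl
  simp only [← Real.sqrt_eq_rpow]
  set N := √(∫ x, (u x ^ 2 + ‖gradient u x‖ ^ 2) ∂μ)
  set NK := √(∫ p, K p ^ 2 ∂(μ.prod μ))
  have hNK : √(∫ x, √(∫ y, K (x, y) ^ 2 ∂μ) ^ 2 ∂μ) = NK := by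
    rw [integral_sq_sqrt_integral_sq_section hK]
  have hu_meas : AEStronglyMeasurable u μ :=
    (DifferentiableOn.continuousOn fun x hx => (hu x hx).differentiableWithinAt)
      |>.aemeasurable hΩ |>.aestronglyMeasurable
  have hgL2 : MemLp (fun x => ‖gradient u x‖) 2 μ :=
    memLp_two_of_sq_le (measurable_gradient u).norm.aestronglyMeasurable hH1
      fun _ => le_add_of_nonneg_left (sq_nonneg _)
  obtain ⟨hhL2, hhN⟩ := sqrt_integral_sq_max_sub_le hS
    (memLp_two_of_sq_le hu_meas hH1 fun _ => le_add_of_nonneg_right (sq_nonneg _)) hΘ hΘS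
  have huN : √(∫ x, u x ^ 2 ∂μ) ≤ N :=
    sqrt_integral_sq_le_of_sq_le hH1 (.of_forall fun _ => le_add_of_nonneg_right (sq_nonneg _))
  have hgN : √(∫ x, ‖gradient u x‖ ^ 2 ∂μ) ≤ N :=
    sqrt_integral_sq_le_of_sq_le hH1 (.of_forall fun _ => le_add_of_nonneg_left (sq_nonneg _))
  calc _ ≤ √(∫ y, max (u y - Θ y) 0 ^ 2 ∂μ) * NK
        + ((W + M) * √(∫ x, ‖gradient u x‖ ^ 2 ∂μ) + M * V) := by
        rw [← hNK, ← hV]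
        refine sqrt_integral_sq_le_of_abs_le_mul_add (Real.sqrt_nonneg _) (by positivity) hM
          hK.sqrt_integral_sq_section hgL2 ?_
        filter_upwards [ae_abs_integral_mul_section_le hK hhL2, hωW] with x hxK hxω
        refine (abs_add_le _ _).trans (add_le_add hxK ?_)
        rw [abs_of_nonneg (le_max_right _ _)]
        exact max_neg_inner_add_mul_rpow_le hxω (hβ _) (by linarith) (by linarith)
    _ ≤ (N + S * V) * NK + ((W + M) * N + M * V) := by
        rw [← hV]
        gcongr
        exact hhN.trans (by gcongr)
    _ ≤ _ := add_mul_add_le_mul_mul_add_one (Real.sqrt_nonneg _) (Real.sqrt_nonneg _) hS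
        (Real.sqrt_nonneg _) hW hM
end
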